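/- arXiv:1303.0018 — 5 statements merged into one kernel-verified Lean document; each statement's English description precedes it below -/
import Mathlib

section
/- Let n ≥ 1, w > 0, τ ≥ 0, and α̃ ∈ ℝⁿ. Define the weights cᵢ = 1 if α̃ᵢ ≥ 0 and cᵢ = w if α̃ᵢ < 0. Suppose α₁ ∈ ℝⁿ is a minimizer of α ↦ ‖α − α̃‖₂ over the set C₁ = {α ∈ ℝⁿ : ‖α|₁,w ≤ τ}, and α₂ ∈ ℝⁿ is a minimizer of α ↦ ‖α − α̃‖₂ over the set C₂ = {α ∈ ℝⁿ : Σᵢ cᵢ|αᵢ| ≤ τ}. Then α₁ = α₂. -/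
/-- The asymmetric ℓ1 functional `‖α|₁,w`. -/
noncomputable def asymL1 {n : ℕ} (w : ℝ) (α : EuclideanSpace ℝ (Fin n)) : ℝ :=
  ∑ i, if 0 ≤ α i then |α i| else w * |α i|

theorem stmt3 {n : ℕ} (hn : 1 ≤ n) (w : ℝ) (hw : 0 < w) (τ : ℝ) (hτ : 0 ≤ τ)
    (αt α₁ α₂ : EuclideanSpace ℝ (Fin n))
    (h₁feas : asymL1 w α₁ ≤ τ)
    (h₁min : ∀ β : EuclideanSpace ℝ (Fin n), asymL1 w β ≤ τ → ‖α₁ - αt‖ ≤ ‖β - αt‖)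
    (h₂feas : ∑ i, (if 0 ≤ αt i then (1 : ℝ) else w) * |α₂ i| ≤ τ)
    (h₂min : ∀ β : EuclideanSpace ℝ (Fin n),
      ∑ i, (if 0 ≤ αt i then (1 : ℝ) else w) * |β i| ≤ τ → ‖α₂ - αt‖ ≤ ‖β - αt‖) :
    α₁ = α₂ := by
  set c : Fin n → ℝ := fun i => if 0 ≤ αt i then (1 : ℝ) else w with hc_def
  have hc : ∀ i, 0 < c i := by
    intro i; simp only [c]; split
    · norm_num
    · exact hw
  -- replacing a wrongly-signed coordinate by 0 strictly decreases the distance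
  have hdist : ∀ (α : EuclideanSpace ℝ (Fin n)) (i : Fin n),
      ((0 ≤ αt i ∧ α i < 0) ∨ (αt i < 0 ∧ 0 < α i)) →
      ∀ β : EuclideanSpace ℝ (Fin n), (∀ j, β j = if j = i then 0 else α j) →
      ‖β - αt‖ < ‖α - αt‖ := by
    intro α i hi β hβ
    rw [EuclideanSpace.norm_eq, EuclideanSpace.norm_eq]
    apply Real.sqrt_lt_sqrt
    · positivity
    · apply Finset.sum_lt_sum
      · intro j _
        simp only [PiLp.sub_apply, Real.norm_eq_abs, sq_abs]
        rw [hβ j]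
        by_cases hji : j = i
        · subst hji
          rw [if_pos rfl]
          rcases hi with ⟨h1, h2⟩ | ⟨h1, h2⟩ <;> nlinarith
        · simp [hji]
      · refine ⟨i, Finset.mem_univ i, ?_⟩
        simp only [PiLp.sub_apply, Real.norm_eq_abs, sq_abs]
        rw [hβ i]
        rw [if_pos rfl]
        rcases hi with ⟨h1, h2⟩ | ⟨h1, h2⟩ <;> nlinarith
  -- no wrongly-signed coordinate for α₁
  have ng₁ : ∀ i, ¬((0 ≤ αt i ∧ α₁ i < 0) ∨ (αt i < 0 ∧ 0 < α₁ i)) := by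
    intro i hbad
    set β : EuclideanSpace ℝ (Fin n) := WithLp.toLp 2 (fun j => if j = i then 0 else α₁ j) with hβ
    have hfeas : asymL1 w β ≤ τ := by
      refine le_trans ?_ h₁feas
      unfold asymL1
      apply Finset.sum_le_sum
      intro j _
      by_cases hji : j = i
      · subst hji
        have : β j = 0 := by simp [β]
        rw [this]
        have h0 : (if (0:ℝ) ≤ 0 then |(0:ℝ)| else w * |(0:ℝ)|) = 0 := by norm_num
        rw [h0]
        split
        · positivity
        · positivity
      · have : β j = α₁ j := by simp [β, hji]
        rw [this]
    have h1 := h₁min β hfeas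
    have h2 := hdist α₁ i hbad β (fun j => rfl)
    linarith
  have hs₁ : ∀ i, (0 ≤ αt i → 0 ≤ α₁ i) ∧ (αt i < 0 → α₁ i ≤ 0) := by
    intro i
    constructor
    · intro ht; by_contra h; exact ng₁ i (Or.inl ⟨ht, lt_of_not_ge h⟩)
    · intro ht; by_contra h; exact ng₁ i (Or.inr ⟨ht, lt_of_not_ge h⟩)
  -- no wrongly-signed coordinate for α₂
  have ng₂ : ∀ i, ¬((0 ≤ αt i ∧ α₂ i < 0) ∨ (αt i < 0 ∧ 0 < α₂ i)) := by
    intro i hbad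
    set β : EuclideanSpace ℝ (Fin n) := WithLp.toLp 2 (fun j => if j = i then 0 else α₂ j) with hβ
    have hfeas : ∑ j, (if 0 ≤ αt j then (1 : ℝ) else w) * |β j| ≤ τ := by
      refine le_trans ?_ h₂feas
      apply Finset.sum_le_sum
      intro j _
      by_cases hji : j = i
      · subst hji
        have : β j = 0 := by simp [β]
        rw [this]
        simp only [abs_zero, mul_zero]
        have := hc j
        simp only [c] at this
        positivity
      · have : β j = α₂ j := by simp [β, hji]
        rw [this]
    have h1 := h₂min β hfeas
    have h2 := hdist α₂ i hbad β (fun j => rfl)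
    linarith
  have hs₂ : ∀ i, (0 ≤ αt i → 0 ≤ α₂ i) ∧ (αt i < 0 → α₂ i ≤ 0) := by
    intro i
    constructor
    · intro ht; by_contra h; exact ng₂ i (Or.inl ⟨ht, lt_of_not_ge h⟩)
    · intro ht; by_contra h; exact ng₂ i (Or.inr ⟨ht, lt_of_not_ge h⟩)
  -- on sign-matched points the two functionals agree
  have key : ∀ (α : EuclideanSpace ℝ (Fin n)),
      (∀ i, (0 ≤ αt i → 0 ≤ α i) ∧ (αt i < 0 → α i ≤ 0)) →
      asymL1 w α = ∑ i, c i * |α i| := by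
    intro α h
    unfold asymL1
    apply Finset.sum_congr rfl
    intro i _
    by_cases ht : 0 ≤ αt i
    · have hαi : 0 ≤ α i := (h i).1 ht
      simp [c, ht, hαi]
    · have hle : α i ≤ 0 := (h i).2 (lt_of_not_ge ht)
      rcases hle.lt_or_eq with hlt | heq
      · simp [c, ht, not_le.mpr hlt]
      · simp [c, ht, heq]
  have e₁ : asymL1 w α₁ = ∑ i, c i * |α₁ i| := key α₁ hs₁
  have e₂ : asymL1 w α₂ = ∑ i, c i * |α₂ i| := key α₂ hs₂
  have h₁feas' : ∑ i, c i * |α₁ i| ≤ τ := e₁ ▸ h₁feas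
  have h₂feas' : asymL1 w α₂ ≤ τ := by rw [e₂]; exact h₂feas
  have hd : ‖α₁ - αt‖ = ‖α₂ - αt‖ :=
    le_antisymm (h₁min α₂ h₂feas') (h₂min α₁ h₁feas')
  by_contra hne
  set m : EuclideanSpace ℝ (Fin n) := (2:ℝ)⁻¹ • (α₁ + α₂) with hm
  have hmfeas : ∑ i, c i * |m i| ≤ τ := by
    have hstep : ∀ i, c i * |m i| ≤ (2:ℝ)⁻¹ * (c i * |α₁ i| + c i * |α₂ i|) := by
      intro i
      have hmi : m i = (2:ℝ)⁻¹ * (α₁ i + α₂ i) := by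
        simp [m, PiLp.smul_apply, PiLp.add_apply, smul_eq_mul, mul_add]
      rw [hmi]
      have habs : |(2:ℝ)⁻¹ * (α₁ i + α₂ i)| ≤ (2:ℝ)⁻¹ * (|α₁ i| + |α₂ i|) := by
        rw [abs_mul]
        have := abs_add_le (α₁ i) (α₂ i)
        have h2 : |(2:ℝ)⁻¹| = (2:ℝ)⁻¹ := by norm_num
        rw [h2]
        nlinarith
      have hci := (hc i).le
      nlinarith [abs_nonneg (α₁ i), abs_nonneg (α₂ i)]
    calc ∑ i, c i * |m i| ≤ ∑ i, (2:ℝ)⁻¹ * (c i * |α₁ i| + c i * |α₂ i|) :=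
          Finset.sum_le_sum fun i _ => hstep i
      _ = (2:ℝ)⁻¹ * ((∑ i, c i * |α₁ i|) + ∑ i, c i * |α₂ i|) := by
          rw [← Finset.mul_sum, Finset.sum_add_distrib]
      _ ≤ τ := by
          have := h₂feas
          rw [hc_def] at *
          nlinarith [h₁feas', h₂feas]
  have hmin := h₂min m hmfeas
  -- but the midpoint is strictly closer
  have hmeq : m - αt = (2:ℝ)⁻¹ • ((α₁ - αt) + (α₂ - αt)) := by
    rw [hm]
    module
  have hne' : (α₁ - αt) - (α₂ - αt) ≠ 0 := by
    intro h
    apply hne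
    have := sub_eq_zero.mp h
    exact sub_left_injective this
  have hpar := parallelogram_law_with_norm ℝ (α₁ - αt) (α₂ - αt)
  have hsubpos : 0 < ‖(α₁ - αt) - (α₂ - αt)‖ := norm_pos_iff.mpr hne'
  have hnm : ‖m - αt‖ = (2:ℝ)⁻¹ * ‖(α₁ - αt) + (α₂ - αt)‖ := by
    rw [hmeq, norm_smul]
    norm_num
  have hlt : ‖m - αt‖ < ‖α₂ - αt‖ := by
    rw [hnm]
    nlinarith [norm_nonneg ((α₁ - αt) + (α₂ - αt)), norm_nonneg (α₂ - αt), hd]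
  linarith
end

section
/- Let w > 0, τ ≥ 0, and α̃ ∈ ℝⁿ. Suppose α⊥ ∈ ℝⁿ is a minimizer of α ↦ ‖α − α̃‖₂ over the set {α ∈ ℝⁿ : ‖α|₁,w ≤ τ}. Then for every index i, α̃ᵢ · α⊥ᵢ ≥ 0, and if α̃ᵢ = 0 then α⊥ᵢ = 0; in other words, every nonzero component of α⊥ has the same (strict) sign as the corresponding component of α̃. -/
theorem stmt4 {n : ℕ} (w : ℝ) (hw : 0 < w) (τ : ℝ) (hτ : 0 ≤ τ)
    (αt αp : EuclideanSpace ℝ (Fin n))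
    (hfeas : asymL1 w αp ≤ τ)
    (hmin : ∀ β : EuclideanSpace ℝ (Fin n), asymL1 w β ≤ τ → ‖αp - αt‖ ≤ ‖β - αt‖) :
    ∀ i, αt i * αp i ≥ 0 ∧ (αt i = 0 → αp i = 0) := by
  intro i
  -- Key: (αt i)^2 < (αp i - αt i)^2 is impossible
  have key : ¬ ((αt i)^2 < (αp i - αt i)^2) := by
    intro hlt
    set β : EuclideanSpace ℝ (Fin n) := WithLp.toLp 2 (Function.update αp.ofLp i (0:ℝ)) with hβ
    have hβi : β i = 0 := Function.update_self i 0 αp.ofLp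
    have hβj : ∀ j, j ≠ i → β j = αp j := fun j hj => Function.update_of_ne hj 0 αp.ofLp
    have hfeas' : asymL1 w β ≤ τ := by
      refine le_trans ?_ hfeas
      unfold asymL1
      apply Finset.sum_le_sum
      intro j _
      by_cases hj : j = i
      · subst hj
        rw [hβi]
        simp only [le_refl, if_true, abs_zero]
        split_ifs
        · exact abs_nonneg _
        · positivity
      · rw [hβj j hj]
    have hle : ∀ j ∈ Finset.univ, ‖β j - αt j‖^2 ≤ ‖αp j - αt j‖^2 := by
      intro j _
      by_cases hj : j = i
      · subst hj
        rw [hβi]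
        simp only [Real.norm_eq_abs, sq_abs, zero_sub]
        nlinarith
      · rw [hβj j hj]
    have hlti : ‖β i - αt i‖^2 < ‖αp i - αt i‖^2 := by
      rw [hβi]
      simp only [Real.norm_eq_abs, sq_abs, zero_sub]
      nlinarith
    have hsum : ∑ j, ‖β j - αt j‖^2 < ∑ j, ‖αp j - αt j‖^2 :=
      Finset.sum_lt_sum hle ⟨i, Finset.mem_univ i, hlti⟩
    have hnorm : ‖β - αt‖ < ‖αp - αt‖ := by
      rw [EuclideanSpace.norm_eq, EuclideanSpace.norm_eq]
      apply Real.sqrt_lt_sqrt (by positivity)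
      simpa [PiLp.sub_apply] using hsum
    exact absurd (hmin β hfeas') (not_le.mpr hnorm)
  constructor
  · by_contra h
    push_neg at h
    have hpne : αp i ≠ 0 := by
      intro h0; rw [h0, mul_zero] at h; exact lt_irrefl 0 h
    exact key (by nlinarith [sq_pos_of_ne_zero hpne])
  · intro h0
    by_contra hp
    exact key (by rw [h0]; nlinarith [sq_pos_of_ne_zero hp])
end

section
/- Let n ≥ 1 and w > 0. For every x ∈ ℝⁿ, the supremum of the inner products ⟨x, y⟩ over all y ∈ ℝⁿ with ‖y|₁,w ≤ 1 is attained and equals ‖x|_{∞,w⁻¹} = maxᵢ ( max(xᵢ, 0) + w⁻¹ · max(−xᵢ, 0) ); that is, ‖x|_{∞,w⁻¹} is the greatest element of the set {⟨x, y⟩ : y ∈ ℝⁿ, ‖y|₁,w ≤ 1}. -/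
open RealInnerProductSpace

theorem stmt6 {n : ℕ} (hn : 1 ≤ n) (w : ℝ) (hw : 0 < w) (x : EuclideanSpace ℝ (Fin n)) :
    IsGreatest {r : ℝ | ∃ y : EuclideanSpace ℝ (Fin n), asymL1 w y ≤ 1 ∧ ⟪x, y⟫ = r}
      (⨆ i, (max (x i) 0 + w⁻¹ * max (-x i) 0)) := by
  haveI : Nonempty (Fin n) := ⟨⟨0, hn⟩⟩
  set f : Fin n → ℝ := fun i => max (x i) 0 + w⁻¹ * max (-x i) 0 with hf
  have hf0 : ∀ i, 0 ≤ f i := fun i =>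
    add_nonneg (le_max_right _ _) (mul_nonneg (inv_nonneg.2 hw.le) (le_max_right _ _))
  obtain ⟨i₀, hi₀⟩ := Finite.exists_max f
  have hbdd : BddAbove (Set.range f) := Set.Finite.bddAbove (Set.finite_range f)
  have hFsup : (⨆ i, f i) = f i₀ := le_antisymm (ciSup_le hi₀) (le_ciSup hbdd i₀)
  constructor
  · rw [show (⨆ i, (max (x i) 0 + w⁻¹ * max (-x i) 0)) = f i₀ from hFsup]
    by_cases hx : 0 ≤ x i₀
    · refine ⟨EuclideanSpace.single i₀ 1, ?_, ?_⟩
      · unfold asymL1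
        rw [Fintype.sum_eq_single i₀ (fun j hj => by
          simp [EuclideanSpace.single_apply, hj])]
        simp
      · rw [EuclideanSpace.inner_single_right]
        simp only [hf, map_one, one_mul, RCLike.conj_to_real]
        have h1 : max (x i₀) 0 = x i₀ := max_eq_left hx
        have h2 : max (-x i₀) 0 = 0 := max_eq_right (by linarith)
        rw [h1, h2]; ring
    · refine ⟨EuclideanSpace.single i₀ (-w⁻¹), ?_, ?_⟩
      · unfold asymL1
        rw [Fintype.sum_eq_single i₀ (fun j hj => by
          simp [EuclideanSpace.single_apply, hj])]
        have : ¬ (0 : ℝ) ≤ EuclideanSpace.single i₀ (-w⁻¹) i₀ := by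
          simp [EuclideanSpace.single_apply]
          positivity
        rw [if_neg this]
        simp [EuclideanSpace.single_apply, abs_of_nonneg (inv_nonneg.2 hw.le),
          mul_inv_cancel₀ hw.ne']
      · rw [EuclideanSpace.inner_single_right]
        simp only [hf, RCLike.conj_to_real]
        have h1 : max (x i₀) 0 = 0 := max_eq_right (by linarith [not_le.mp hx])
        have h2 : max (-x i₀) 0 = -x i₀ := max_eq_left (by linarith [not_le.mp hx])
        rw [h1, h2]; ring
  · rintro r ⟨y, hy, rfl⟩
    rw [hFsup]
    have hinner : ⟪x, y⟫ = ∑ i, x i * y i := by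
      rw [PiLp.inner_apply]
      simp [mul_comm]
    rw [hinner]
    have key : ∀ i, x i * y i ≤ f i₀ * (if 0 ≤ y i then |y i| else w * |y i|) := by
      intro i
      have h1 : x i ≤ f i₀ := by
        have : x i ≤ f i := le_trans (le_max_left _ _)
          (le_add_of_nonneg_right (mul_nonneg (inv_nonneg.2 hw.le) (le_max_right _ _)))
        linarith [hi₀ i]
      have h2 : -x i ≤ w * f i₀ := by
        have ha : w⁻¹ * max (-x i) 0 ≤ f i₀ :=
          le_trans (le_add_of_nonneg_left (le_max_right _ _)) (hi₀ i)
        have hb : -x i ≤ max (-x i) 0 := le_max_left _ _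
        have hc : max (-x i) 0 = w * (w⁻¹ * max (-x i) 0) := by
          field_simp
        have hd : w * (w⁻¹ * max (-x i) 0) ≤ w * f i₀ :=
          mul_le_mul_of_nonneg_left ha hw.le
        calc -x i ≤ max (-x i) 0 := hb
          _ = w * (w⁻¹ * max (-x i) 0) := hc
          _ ≤ w * f i₀ := hd
      by_cases hyi : 0 ≤ y i
      · rw [if_pos hyi, abs_of_nonneg hyi]
        nlinarith
      · rw [if_neg hyi, abs_of_neg (not_le.mp hyi)]
        nlinarith [not_le.mp hyi]
    calc ∑ i, x i * y i ≤ ∑ i, f i₀ * (if 0 ≤ y i then |y i| else w * |y i|) :=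
          Finset.sum_le_sum (fun i _ => key i)
      _ = f i₀ * asymL1 w y := by rw [asymL1, Finset.mul_sum]
      _ ≤ f i₀ * 1 := mul_le_mul_of_nonneg_left hy (hf0 i₀)
      _ = f i₀ := mul_one _
end

section
/- Let S₁, S₂ ⊆ ℝ^q be closed sets, and for i = 1, 2 let ψᵢ : ℝ^q → ℝ be a continuous nonnegative function with ψᵢ(x) > 0 for every x in the interior of Sᵢ and ψᵢ(x) = 0 for every x ∉ Sᵢ. Then the intersection over all a > 0 of the positive supports of ψ₁ − a·ψ₂ satisfies: ⋂_{a > 0} {x ∈ ℝ^q : ψ₁(x) − a·ψ₂(x) > 0} = int(S₁) \ int(S₂). -/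
theorem stmt10 {q : ℕ} (S₁ S₂ : Set (EuclideanSpace ℝ (Fin q)))
    (h₁ : IsClosed S₁) (h₂ : IsClosed S₂)
    (ψ₁ ψ₂ : EuclideanSpace ℝ (Fin q) → ℝ)
    (hc₁ : Continuous ψ₁) (hc₂ : Continuous ψ₂)
    (hnn₁ : ∀ x, 0 ≤ ψ₁ x) (hnn₂ : ∀ x, 0 ≤ ψ₂ x)
    (hpos₁ : ∀ x ∈ interior S₁, 0 < ψ₁ x) (hpos₂ : ∀ x ∈ interior S₂, 0 < ψ₂ x)
    (hz₁ : ∀ x ∉ S₁, ψ₁ x = 0) (hz₂ : ∀ x ∉ S₂, ψ₂ x = 0) :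
    (⋂ (a : ℝ) (_ : 0 < a), {x | 0 < ψ₁ x - a * ψ₂ x}) =
      interior S₁ \ interior S₂ := by
  have hsub₁ : {x | 0 < ψ₁ x} ⊆ interior S₁ := by
    apply interior_maximal _ (isOpen_lt continuous_const hc₁)
    intro x hx
    by_contra hxS
    exact absurd (hz₁ x hxS) (ne_of_gt hx)
  have hsub₂ : {x | 0 < ψ₂ x} ⊆ interior S₂ := by
    apply interior_maximal _ (isOpen_lt continuous_const hc₂)
    intro x hx
    by_contra hxS
    exact absurd (hz₂ x hxS) (ne_of_gt hx)
  ext x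
  simp only [Set.mem_iInter, Set.mem_setOf_eq, Set.mem_diff]
  constructor
  · intro h
    have h1 := h 1 one_pos
    have hψ₂ : 0 ≤ ψ₂ x := hnn₂ x
    have hψ₁ : 0 < ψ₁ x := by linarith
    refine ⟨hsub₁ hψ₁, fun hx₂ => ?_⟩
    have hp2 : 0 < ψ₂ x := hpos₂ x hx₂
    have := h (ψ₁ x / ψ₂ x) (div_pos hψ₁ hp2)
    rw [div_mul_cancel₀ _ (ne_of_gt hp2)] at this
    linarith
  · rintro ⟨hx₁, hx₂⟩ a ha
    have hψ₂ : ψ₂ x = 0 := by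
      by_contra h
      exact hx₂ (hsub₂ (lt_of_le_of_ne (hnn₂ x) (Ne.symm h)))
    have := hpos₁ x hx₁
    rw [hψ₂]; linarith
end

section
/- Let I⊕ and I⊖ be finite index sets, and for each index k in I⊕ ∪ I⊖ let S_k ⊆ ℝ^q be a closed set and ψ_k : ℝ^q → ℝ a continuous nonnegative function with ψ_k(x) > 0 for every x in the interior of S_k and ψ_k(x) = 0 for every x ∉ S_k. Then ⋃_{c > 0} ⋂_{a > 0} {x ∈ ℝ^q : Σ_{i ∈ I⊕} ψᵢ(x) − a · Σ_{j ∈ I⊖} ψⱼ(x) > c} = (⋃_{i ∈ I⊕} int(Sᵢ)) \ (⋃_{j ∈ I⊖} int(Sⱼ)). -/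
theorem stmt11 {q : ℕ} {ι : Type*} [DecidableEq ι] (Ip Im : Finset ι)
    (S : ι → Set (EuclideanSpace ℝ (Fin q)))
    (ψ : ι → EuclideanSpace ℝ (Fin q) → ℝ)
    (hcl : ∀ k ∈ Ip ∪ Im, IsClosed (S k))
    (hc : ∀ k ∈ Ip ∪ Im, Continuous (ψ k))
    (hnn : ∀ k ∈ Ip ∪ Im, ∀ x, 0 ≤ ψ k x)
    (hpos : ∀ k ∈ Ip ∪ Im, ∀ x ∈ interior (S k), 0 < ψ k x)
    (hz : ∀ k ∈ Ip ∪ Im, ∀ x, x ∉ S k → ψ k x = 0) :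
    (⋃ (c : ℝ) (_ : 0 < c), ⋂ (a : ℝ) (_ : 0 < a),
        {x | c < ∑ i ∈ Ip, ψ i x - a * ∑ j ∈ Im, ψ j x}) =
      (⋃ i ∈ Ip, interior (S i)) \ (⋃ j ∈ Im, interior (S j)) := by
  ext x
  simp only [Set.mem_iUnion, Set.mem_iInter, Set.mem_setOf_eq, Set.mem_diff, not_exists]
  constructor
  · rintro ⟨c, hc0, ha⟩
    set P := ∑ i ∈ Ip, ψ i x with hP
    set M := ∑ j ∈ Im, ψ j x with hM
    have hPnn : 0 ≤ P := Finset.sum_nonneg fun i hi => hnn i (Finset.mem_union_left _ hi) x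
    have hMnn : 0 ≤ M := Finset.sum_nonneg fun j hj => hnn j (Finset.mem_union_right _ hj) x
    have hM0 : M = 0 := by
      by_contra h
      have hMpos : 0 < M := lt_of_le_of_ne hMnn (Ne.symm h)
      have hapos : 0 < (P + 1) / M := div_pos (by linarith) hMpos
      have := ha ((P + 1) / M) hapos
      rw [div_mul_cancel₀ _ (ne_of_gt hMpos)] at this
      linarith
    have hPc : c < P := by have := ha 1 one_pos; rw [hM0] at this; linarith
    have hψj : ∀ j ∈ Im, ψ j x = 0 := by
      intro j hj
      exact (Finset.sum_eq_zero_iff_of_nonneg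
        (fun j hj => hnn j (Finset.mem_union_right _ hj) x)).mp hM0 j hj
    have hPpos : 0 < P := lt_trans hc0 hPc
    obtain ⟨i, hi, hψi⟩ := Finset.exists_ne_zero_of_sum_ne_zero (ne_of_gt hPpos)
    have hψipos : 0 < ψ i x := lt_of_le_of_ne (hnn i (Finset.mem_union_left _ hi) x) (Ne.symm hψi)
    refine ⟨⟨i, hi, ?_⟩, ?_⟩
    · have hopen : IsOpen ((ψ i) ⁻¹' Set.Ioi 0) :=
        (hc i (Finset.mem_union_left _ hi)).isOpen_preimage _ isOpen_Ioi
      have hsub : (ψ i) ⁻¹' Set.Ioi 0 ⊆ S i := by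
        intro y hy
        by_contra hyS
        have := hz i (Finset.mem_union_left _ hi) y hyS
        simp [Set.mem_preimage, this] at hy
      exact interior_maximal hsub hopen hψipos
    · intro j hj hxint
      have := hpos j (Finset.mem_union_right _ hj) x hxint
      rw [hψj j hj] at this
      exact lt_irrefl 0 this
  · rintro ⟨⟨i, hi, hxi⟩, hnot⟩
    have hψipos : 0 < ψ i x := hpos i (Finset.mem_union_left _ hi) x hxi
    have hψj : ∀ j ∈ Im, ψ j x = 0 := by
      intro j hj
      by_cases hxS : x ∈ S j
      · -- x is in S j but not its interior, hence in the closure of the complement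
        have hfr : x ∈ frontier (S j) := by
          rw [frontier, (hcl j (Finset.mem_union_right _ hj)).closure_eq]
          exact ⟨hxS, hnot j hj⟩
        have hcl' : x ∈ closure (S j)ᶜ := by
          rw [frontier_eq_closure_inter_closure] at hfr
          exact hfr.2
        have hclosed : IsClosed ((ψ j) ⁻¹' {0}) :=
          isClosed_singleton.preimage (hc j (Finset.mem_union_right _ hj))
        have hsub : (S j)ᶜ ⊆ (ψ j) ⁻¹' {0} := fun y hy =>
          hz j (Finset.mem_union_right _ hj) y hy
        have : x ∈ (ψ j) ⁻¹' {0} := by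
          have := closure_mono hsub hcl'
          rwa [hclosed.closure_eq] at this
        exact this
      · exact hz j (Finset.mem_union_right _ hj) x hxS
    have hM0 : ∑ j ∈ Im, ψ j x = 0 := Finset.sum_eq_zero hψj
    have hPi : ψ i x ≤ ∑ i ∈ Ip, ψ i x :=
      Finset.single_le_sum (fun k hk => hnn k (Finset.mem_union_left _ hk) x) hi
    refine ⟨ψ i x / 2, by linarith, fun a ha => ?_⟩
    rw [hM0, mul_zero]
    linarith
end
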